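/- arXiv:2503.13902 — 3 statements merged into one kernel-verified Lean document; each statement's English description precedes it below -/
import Mathlib

section
/- For all z_1 in [0,1] and z_2, z_3 in the closed unit disk, |4(1-|z_2|²)(1-z_1²) z_1 z_3 - z_1⁴ - (3+z_1²)(1-z_1²) z_2²| ≤ 3, so that (1/12) times this expression is at most 1/4. -/
open Metric Complex

theorem H22_key_ineq (x : ℝ) (hx : x ∈ Set.Icc (0 : ℝ) 1)
    (z₂ z₃ : ℂ) (hz₂ : z₂ ∈ closedBall (0 : ℂ) 1) (hz₃ : z₃ ∈ closedBall (0 : ℂ) 1) :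
    ‖4 * (1 - (‖z₂‖ : ℂ) ^ 2) * (1 - (x : ℂ) ^ 2) * (x : ℂ) * z₃ - (x : ℂ) ^ 4 -
        (3 + (x : ℂ) ^ 2) * (1 - (x : ℂ) ^ 2) * z₂ ^ 2‖ ≤ 3 ∧
    (1 / 12 : ℝ) * ‖4 * (1 - (‖z₂‖ : ℂ) ^ 2) * (1 - (x : ℂ) ^ 2) * (x : ℂ) * z₃ -
        (x : ℂ) ^ 4 - (3 + (x : ℂ) ^ 2) * (1 - (x : ℂ) ^ 2) * z₂ ^ 2‖ ≤ 1 / 4 := by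
  obtain ⟨hx0, hx1⟩ := hx
  simp only [mem_closedBall, dist_zero_right] at hz₂ hz₃
  have hb0 : (0 : ℝ) ≤ ‖z₂‖ := norm_nonneg _
  have h3 : (0 : ℝ) ≤ ‖z₃‖ := norm_nonneg _
  set b := ‖z₂‖ with hbdef
  have hb2 : b ^ 2 ≤ 1 := by nlinarith
  have hx2 : x ^ 2 ≤ 1 := by nlinarith
  have main : ‖4 * (1 - (b : ℂ) ^ 2) * (1 - (x : ℂ) ^ 2) * (x : ℂ) * z₃ - (x : ℂ) ^ 4 -
        (3 + (x : ℂ) ^ 2) * (1 - (x : ℂ) ^ 2) * z₂ ^ 2‖ ≤ 3 := by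
    have e1 : ‖4 * (1 - (b : ℂ) ^ 2) * (1 - (x : ℂ) ^ 2) * (x : ℂ) * z₃‖
        = 4 * (1 - b ^ 2) * (1 - x ^ 2) * x * ‖z₃‖ := by
      rw [show (4 * (1 - (b : ℂ) ^ 2) * (1 - (x : ℂ) ^ 2) * (x : ℂ))
          = ((4 * (1 - b ^ 2) * (1 - x ^ 2) * x : ℝ) : ℂ) by push_cast; ring,
        norm_mul, Complex.norm_real, Real.norm_eq_abs, _root_.abs_of_nonneg
          (mul_nonneg (mul_nonneg (mul_nonneg (by norm_num) (by linarith)) (by linarith)) hx0)]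
    have e2 : ‖((x : ℂ)) ^ 4‖ = x ^ 4 := by
      rw [show ((x : ℂ)) ^ 4 = ((x ^ 4 : ℝ) : ℂ) by push_cast; ring,
        Complex.norm_real, Real.norm_eq_abs, _root_.abs_of_nonneg (by positivity)]
    have e3 : ‖(3 + (x : ℂ) ^ 2) * (1 - (x : ℂ) ^ 2) * z₂ ^ 2‖
        = (3 + x ^ 2) * (1 - x ^ 2) * b ^ 2 := by
      rw [show ((3 + (x : ℂ) ^ 2) * (1 - (x : ℂ) ^ 2))
          = (((3 + x ^ 2) * (1 - x ^ 2) : ℝ) : ℂ) by push_cast; ring,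
        norm_mul, Complex.norm_real, Real.norm_eq_abs, _root_.abs_of_nonneg (mul_nonneg (by nlinarith) (by linarith)), norm_pow]
    calc ‖4 * (1 - (b : ℂ) ^ 2) * (1 - (x : ℂ) ^ 2) * (x : ℂ) * z₃ - (x : ℂ) ^ 4 -
        (3 + (x : ℂ) ^ 2) * (1 - (x : ℂ) ^ 2) * z₂ ^ 2‖
        ≤ ‖4 * (1 - (b : ℂ) ^ 2) * (1 - (x : ℂ) ^ 2) * (x : ℂ) * z₃ - (x : ℂ) ^ 4‖ +
          ‖(3 + (x : ℂ) ^ 2) * (1 - (x : ℂ) ^ 2) * z₂ ^ 2‖ := norm_sub_le _ _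
      _ ≤ ‖4 * (1 - (b : ℂ) ^ 2) * (1 - (x : ℂ) ^ 2) * (x : ℂ) * z₃‖ + ‖((x : ℂ)) ^ 4‖ +
          ‖(3 + (x : ℂ) ^ 2) * (1 - (x : ℂ) ^ 2) * z₂ ^ 2‖ := by
            have := norm_sub_le (4 * (1 - (b : ℂ) ^ 2) * (1 - (x : ℂ) ^ 2) * (x : ℂ) * z₃)
              ((x : ℂ) ^ 4)
            linarith
      _ = 4 * (1 - b ^ 2) * (1 - x ^ 2) * x * ‖z₃‖ + x ^ 4 + (3 + x ^ 2) * (1 - x ^ 2) * b ^ 2 := by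
            rw [e1, e2, e3]
      _ ≤ 4 * (1 - b ^ 2) * (1 - x ^ 2) * x + x ^ 4 + (3 + x ^ 2) * (1 - x ^ 2) * b ^ 2 := by
            nlinarith [mul_nonneg (mul_nonneg (mul_nonneg (by norm_num : (0:ℝ) ≤ 4)
              (by linarith : (0:ℝ) ≤ 1 - b ^ 2)) (by linarith : (0:ℝ) ≤ 1 - x ^ 2)) hx0]
      _ ≤ 3 := by
            have hg : (0:ℝ) ≤ 3 - 4*x + 4*x^3 - x^4 := by
              nlinarith [sq_nonneg (x - 1), mul_nonneg hx0 (by linarith : (0:ℝ) ≤ 1 - x),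
                sq_nonneg x, mul_nonneg (mul_nonneg hx0 hx0) (by linarith : (0:ℝ) ≤ 1 - x)]
            have h1 : (0:ℝ) ≤ (1 - b^2) * (3 - 4*x + 4*x^3 - x^4) :=
              mul_nonneg (by linarith) hg
            have h2 : (0:ℝ) ≤ b^2 * (2*x^2) := by positivity
            nlinarith [h1, h2]
  exact ⟨main, by linarith⟩
end

section
/- For all z_1 ∈ [0,1] and z_2, z_3 in the closed unit disk, ((1-z_1²)/12)·|(1-|z_2|²) z_1 z_3 + ((z_1²+3)/4) z_2²| ≤ 1/16. -/
open Metric Complex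

theorem log_key_ineq (x : ℝ) (hx : x ∈ Set.Icc (0 : ℝ) 1)
    (z₂ z₃ : ℂ) (hz₂ : z₂ ∈ closedBall (0 : ℂ) 1) (hz₃ : z₃ ∈ closedBall (0 : ℂ) 1) :
    ((1 - x ^ 2) / 12) *
        ‖(1 - (‖z₂‖ : ℂ) ^ 2) * (x : ℂ) * z₃ + (((x : ℂ) ^ 2 + 3) / 4) * z₂ ^ 2‖
      ≤ 1 / 16 := by
  obtain ⟨hx0, hx1⟩ := hx
  set b := ‖z₂‖ with hbdef
  have hb0 : 0 ≤ b := norm_nonneg _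
  have hb1 : b ≤ 1 := by simpa [Complex.dist_eq] using hz₂
  have hc0 : 0 ≤ ‖z₃‖ := norm_nonneg _
  have hc1 : ‖z₃‖ ≤ 1 := by simpa [Complex.dist_eq] using hz₃
  set c := ‖z₃‖ with hcdef
  have h1 : (1 - (b:ℂ) ^ 2) = ((1 - b ^ 2 : ℝ) : ℂ) := by push_cast; ring
  have h2 : (((x : ℂ) ^ 2 + 3) / 4) = (((x ^ 2 + 3) / 4 : ℝ) : ℂ) := by push_cast; ring
  have e1 : ‖(1 - (b:ℂ) ^ 2) * (x : ℂ) * z₃‖ = (1 - b ^ 2) * x * c := by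
    rw [h1, norm_mul, norm_mul, Complex.norm_real, Complex.norm_real,
      Real.norm_eq_abs, Real.norm_eq_abs, _root_.abs_of_nonneg (by nlinarith : (0:ℝ) ≤ 1 - b ^ 2),
      _root_.abs_of_nonneg hx0]
  have e2 : ‖(((x : ℂ) ^ 2 + 3) / 4) * z₂ ^ 2‖ = ((x ^ 2 + 3) / 4) * b ^ 2 := by
    rw [h2, norm_mul, norm_pow, Complex.norm_real, Real.norm_eq_abs,
      _root_.abs_of_nonneg (by nlinarith : (0:ℝ) ≤ (x ^ 2 + 3) / 4)]
  have hnorm : ‖(1 - (b:ℂ) ^ 2) * (x : ℂ) * z₃ + (((x : ℂ) ^ 2 + 3) / 4) * z₂ ^ 2‖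
      ≤ (1 - b ^ 2) * x * c + ((x ^ 2 + 3) / 4) * b ^ 2 := by
    calc ‖(1 - (b:ℂ) ^ 2) * (x : ℂ) * z₃ + (((x : ℂ) ^ 2 + 3) / 4) * z₂ ^ 2‖
        ≤ ‖(1 - (b:ℂ) ^ 2) * (x : ℂ) * z₃‖ + ‖(((x : ℂ) ^ 2 + 3) / 4) * z₂ ^ 2‖ :=
          norm_add_le _ _
      _ = (1 - b ^ 2) * x * c + ((x ^ 2 + 3) / 4) * b ^ 2 := by rw [e1, e2]
  have hfac : 0 ≤ (1 - x ^ 2) / 12 := by nlinarith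
  have key : ((1 - x ^ 2) / 12) * ((1 - b ^ 2) * x * c + ((x ^ 2 + 3) / 4) * b ^ 2)
      ≤ 1 / 16 := by
    have hA : (0:ℝ) ≤ (1 - b ^ 2) * x * (1 - x ^ 2) * (1 - c) := by
      apply mul_nonneg
      apply mul_nonneg
      apply mul_nonneg
      · nlinarith
      · exact hx0
      · nlinarith
      · nlinarith
    have hB : (0:ℝ) ≤ (1 - x ^ 2) * ((x - 1) * (x - 3)) * (1 - b ^ 2) := by
      apply mul_nonneg
      apply mul_nonneg
      · nlinarith
      · nlinarith
      · nlinarith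
    nlinarith [sq_nonneg x, sq_nonneg (x ^ 2), mul_nonneg (sq_nonneg x) (sq_nonneg x)]
  calc ((1 - x ^ 2) / 12) *
        ‖(1 - (b:ℂ) ^ 2) * (x : ℂ) * z₃ + (((x : ℂ) ^ 2 + 3) / 4) * z₂ ^ 2‖
      ≤ ((1 - x ^ 2) / 12) * ((1 - b ^ 2) * x * c + ((x ^ 2 + 3) / 4) * b ^ 2) :=
        mul_le_mul_of_nonneg_left hnorm hfac
    _ ≤ 1 / 16 := key
end

section
/- For all t ∈ [0,1], (1/12)(3 + 4t² - 2t⁴) ≤ 5/12, with equality iff t = 1; more generally, for z_1 ∈ [0,1] and |z_2|, |z_3| ≤ 1, (5/12)z_1⁴ + ((1-z_1²)/12)(4(1-|z_2|²)z_1|z_3| + 6z_1²|z_2| + (3+z_1²)|z_2|²) ≤ 5/12. -/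
open Metric Complex

theorem inverse_key_ineq :
    (∀ t ∈ Set.Icc (0 : ℝ) 1,
      (1 / 12 : ℝ) * (3 + 4 * t ^ 2 - 2 * t ^ 4) ≤ 5 / 12 ∧
      ((1 / 12 : ℝ) * (3 + 4 * t ^ 2 - 2 * t ^ 4) = 5 / 12 ↔ t = 1)) ∧
    ∀ x : ℝ, x ∈ Set.Icc (0 : ℝ) 1 → ∀ z₂ z₃ : ℂ, ‖z₂‖ ≤ 1 → ‖z₃‖ ≤ 1 →
      (5 / 12 : ℝ) * x ^ 4 + ((1 - x ^ 2) / 12) *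
        (4 * (1 - ‖z₂‖ ^ 2) * x * ‖z₃‖ + 6 * x ^ 2 * ‖z₂‖ + (3 + x ^ 2) * ‖z₂‖ ^ 2)
      ≤ 5 / 12 := by
  constructor
  · rintro t ⟨ht0, ht1⟩
    refine ⟨by nlinarith [sq_nonneg (1 - t ^ 2)], ?_⟩
    constructor
    · intro h
      have h2 : (1 - t ^ 2) ^ 2 = 0 := by nlinarith
      have : t ^ 2 = 1 := by nlinarith
      nlinarith
    · rintro rfl; norm_num
  · rintro x ⟨hx0, hx1⟩ z₂ z₃ h2 h3
    set a := ‖z₂‖ with ha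
    set b := ‖z₃‖ with hb
    have ha0 : 0 ≤ a := norm_nonneg _
    have hb0 : 0 ≤ b := norm_nonneg _
    have hx2 : x ^ 2 ≤ 1 := by nlinarith
    have ha2 : a ^ 2 ≤ 1 := by nlinarith
    -- replace b by 1
    have step1 : (4 : ℝ) * (1 - a ^ 2) * x * b ≤ 4 * (1 - a ^ 2) * x * 1 := by
      have : (0 : ℝ) ≤ 4 * (1 - a ^ 2) * x := by nlinarith
      nlinarith [mul_nonneg this (sub_nonneg.2 h3)]
    have key : 4 * (1 - a ^ 2) * x * 1 + 6 * x ^ 2 * a + (3 + x ^ 2) * a ^ 2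
        ≤ 5 + 5 * x ^ 2 := by
      nlinarith [mul_nonneg (mul_nonneg ha0 (sub_nonneg.2 h2))
          (mul_nonneg (sub_nonneg.2 hx1) (by linarith : (0:ℝ) ≤ 3 - x)),
        mul_nonneg (sub_nonneg.2 h2) (by nlinarith : (0:ℝ) ≤ 5 + 5 * x ^ 2 - 4 * x),
        mul_nonneg ha0 (by nlinarith : (0:ℝ) ≤ 2 - 2 * x ^ 2)]
    have hnn : (0 : ℝ) ≤ (1 - x ^ 2) / 12 := by nlinarith
    calc (5 / 12 : ℝ) * x ^ 4 + ((1 - x ^ 2) / 12) *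
          (4 * (1 - a ^ 2) * x * b + 6 * x ^ 2 * a + (3 + x ^ 2) * a ^ 2)
        ≤ (5 / 12 : ℝ) * x ^ 4 + ((1 - x ^ 2) / 12) * (5 + 5 * x ^ 2) := by
          have := mul_le_mul_of_nonneg_left (by linarith [step1, key] :
            4 * (1 - a ^ 2) * x * b + 6 * x ^ 2 * a + (3 + x ^ 2) * a ^ 2
              ≤ 5 + 5 * x ^ 2) hnn
          linarith
      _ = 5 / 12 := by ring
end
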